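/- For all x ∈ (0,1), x^(α(x-1) - γ) < Γ(x) < x^(β(x-1) - γ), where α = 1 - γ and β = (π²/6 - γ)/2, and these constants are best possible. -/

import Mathlib

/-!
Let `G_p(x) = log Γ(x) - (p (x - 1) - γ) log x` (`Alzer.gap p x`); the two bounds say `G_{1-γ} > 0`
and `G_β < 0` on `(0, 1)`. Differentiating the Weierstrass series of `log Γ` termwise gives
`G_p''(x) = ζ(2, x + 1) - p / x - (p + γ - 1) / x²`, and since `G_p(1) = G_p'(1) = 0`, two mean
value steps give `G_p(x) = (1 - x)(1 - ξ) G_p''(η)` with `x < ξ < η < 1`.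

For `p = β`, `-x² G_β''(x) = β x + β + γ - 1 - x² ζ(2, x + 1)` is concave on `(0, 1]`, vanishes
at `1` and is positive on `(0, 1/6]`, so `G_β'' < 0`. For `p = 1 - γ`,
`x G''(x) = x ζ(2, x + 1) - (1 - γ)` is increasing and changes sign once, at some `c`: `G` is
positive on `[c, 1)` by the formula above, positive on `(0, 1/8]` because
`log Γ(x) + log x + γ x ≥ 0`, and concave in between.

Optimality: `G_p(x) = (p - 1 + γ) log x + o(1)` as `x → 0`; and `G_p = G_β + (β - p)(x - 1) log x`,
where `G_β(x) = o((1 - x)²)` as `x → 1` because `G_β''(1) = 0`, while `(x - 1) log x ≥ (1 - x)²`.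
-/

open Real Set

theorem exists_eq_mul_mul_deriv2 {F F' F'' : ℝ → ℝ} {a b : ℝ} (hab : a < b)
    (hF : ∀ x ∈ Icc a b, HasDerivAt F (F' x) x) (hF' : ∀ x ∈ Icc a b, HasDerivAt F' (F'' x) x)
    (hFb : F b = 0) (hF'b : F' b = 0) :
    ∃ ξ ∈ Ioo a b, ∃ η ∈ Ioo ξ b, F a = (b - a) * (b - ξ) * F'' η := by
  obtain ⟨ξ, hξ, h1⟩ := exists_hasDerivAt_eq_slope F F' hab
    (fun x hx => (hF x hx).continuousAt.continuousWithinAt)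
    (fun x hx => hF x (Ioo_subset_Icc_self hx))
  have hξb : Icc ξ b ⊆ Icc a b := Icc_subset_Icc_left hξ.1.le
  obtain ⟨η, hη, h2⟩ := exists_hasDerivAt_eq_slope F' F'' hξ.2
    (fun x hx => (hF' x (hξb hx)).continuousAt.continuousWithinAt)
    (fun x hx => hF' x (hξb (Ioo_subset_Icc_self hx)))
  refine ⟨ξ, hξ, η, hη, ?_⟩
  rw [h2, hF'b, h1, hFb]
  field_simp [(sub_pos.2 hab).ne', (sub_pos.2 hξ.2).ne']
  ring

theorem ConcaveOn.pos_of_pos_of_nonneg {f : ℝ → ℝ} {a b : ℝ} (hf : ConcaveOn ℝ (Icc a b) f)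
    (ha : 0 < f a) (hb : 0 ≤ f b) {x : ℝ} (hx : x ∈ Ico a b) : 0 < f x := by
  have hab : 0 < b - a := by linarith [hx.1, hx.2]
  have h := hf.2 (left_mem_Icc.2 (by linarith)) (right_mem_Icc.2 (by linarith))
    (div_pos (sub_pos.2 hx.2) hab).le (div_nonneg (sub_nonneg.2 hx.1) hab.le)
    (by field_simp [hab.ne']; ring)
  have hx' : ((b - x) / (b - a)) • a + ((x - a) / (b - a)) • b = x := by
    simp only [smul_eq_mul]; field_simp [hab.ne']; ring
  rw [hx'] at h
  refine lt_of_lt_of_le ?_ h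
  simp only [smul_eq_mul]
  exact add_pos_of_pos_of_nonneg (mul_pos (div_pos (sub_pos.2 hx.2) hab) ha)
    (mul_nonneg (div_nonneg (sub_nonneg.2 hx.1) hab.le) hb)

lemma hasSum_one_div_succ_sq : HasSum (fun n : ℕ => 1 / ((n : ℝ) + 1) ^ 2) (π ^ 2 / 6) := by
  have h := (hasSum_nat_add_iff' (f := fun n : ℕ => (1 : ℝ) / (n : ℝ) ^ 2) 1).mpr hasSum_zeta_two
  simpa using h

lemma one_div_succ_add_pow_le (n : ℕ) {k : ℕ} (hk : 2 ≤ k) {x : ℝ} (hx : 0 ≤ x) :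
    1 / ((n : ℝ) + 1 + x) ^ k ≤ 1 / ((n : ℝ) + 1) ^ 2 := by
  have h1 : (1 : ℝ) ≤ n + 1 := by linarith [n.cast_nonneg (α := ℝ)]
  apply one_div_le_one_div_of_le (by positivity)
  calc ((n : ℝ) + 1) ^ 2 ≤ ((n : ℝ) + 1) ^ k := pow_le_pow_right₀ h1 hk
    _ ≤ ((n : ℝ) + 1 + x) ^ k := pow_le_pow_left₀ (by positivity) (by linarith) k

lemma hasDerivAt_one_div_pow (c : ℝ) (k : ℕ) {x : ℝ} (hx : c + x ≠ 0) :
    HasDerivAt (fun y => 1 / (c + y) ^ k) (-k * (1 / (c + x) ^ (k + 1))) x := by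
  have h := (((hasDerivAt_id x).const_add c).fun_pow k).fun_inv (pow_ne_zero k hx)
  simp only [one_div, id] at h ⊢
  refine h.congr_deriv ?_
  rcases k with _ | k
  · simp
  · rw [Nat.add_sub_cancel]
    field_simp
    ring

lemma sub_log_one_add_nonneg {t : ℝ} (ht : 0 ≤ t) : 0 ≤ t - log (1 + t) := by
  linarith [log_le_sub_one_of_pos (x := 1 + t) (by linarith)]

lemma sub_log_one_add_le_sq {t : ℝ} (ht : 0 ≤ t) : t - log (1 + t) ≤ t ^ 2 := by
  have h := one_sub_inv_le_log_of_pos (x := 1 + t) (by linarith)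
  have : t - (1 - (1 + t)⁻¹) ≤ t ^ 2 := by
    rw [show t - (1 - (1 + t)⁻¹) = t ^ 2 / (1 + t) by field_simp; ring]
    exact div_le_self (sq_nonneg t) (by linarith)
  linarith

namespace Alzer

local notation "γ" => Real.eulerMascheroniConstant

local notation "β₀" => (π ^ 2 / 6 - γ) / 2

/-- `hurwitz k x = ζ(k, x + 1)`. -/
noncomputable def hurwitz (k : ℕ) (x : ℝ) : ℝ := ∑' n : ℕ, 1 / ((n : ℝ) + 1 + x) ^ k

lemma summable_hurwitz {k : ℕ} (hk : 2 ≤ k) {x : ℝ} (hx : 0 ≤ x) :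
    Summable fun n : ℕ => 1 / ((n : ℝ) + 1 + x) ^ k :=
  .of_nonneg_of_le (fun n => by positivity) (fun n => one_div_succ_add_pow_le n hk hx)
    hasSum_one_div_succ_sq.summable

lemma hasDerivAt_hurwitz {k : ℕ} (hk : 2 ≤ k) {x : ℝ} (hx : 0 < x) :
    HasDerivAt (hurwitz k) (-k * hurwitz (k + 1) x) x := by
  rw [hurwitz, ← tsum_mul_left]
  refine hasDerivAt_tsum_of_isPreconnected (hasSum_one_div_succ_sq.summable.mul_left (k : ℝ))
    isOpen_Ioi isPreconnected_Ioi (fun n y hy => hasDerivAt_one_div_pow _ k (by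
      have : (0 : ℝ) < y := hy; positivity))
    (fun n y hy => ?_) hx (summable_hurwitz hk hx.le) hx
  have : (0 : ℝ) < y := hy
  rw [norm_mul, norm_neg, Real.norm_natCast, Real.norm_of_nonneg (by positivity)]
  exact mul_le_mul_of_nonneg_left (one_div_succ_add_pow_le n (by omega) this.le) k.cast_nonneg

lemma hurwitz_antitoneOn {k : ℕ} (hk : 2 ≤ k) : AntitoneOn (hurwitz k) (Ici 0) := by
  intro a ha b _ hab
  refine Summable.tsum_le_tsum (fun n => ?_) (summable_hurwitz hk (ha.out.trans hab))
    (summable_hurwitz hk ha.out)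
  have : (0 : ℝ) ≤ a := ha
  gcongr

lemma hasSum_hurwitz_two_one : HasSum (fun n : ℕ => 1 / ((n : ℝ) + 1 + 1) ^ 2) (π ^ 2 / 6 - 1) := by
  have h := (hasSum_nat_add_iff' (f := fun n : ℕ => (1 : ℝ) / ((n : ℝ) + 1) ^ 2) 1).mpr
    hasSum_one_div_succ_sq
  simpa [add_assoc] using h

lemma hurwitz_two_one : hurwitz 2 1 = π ^ 2 / 6 - 1 := hasSum_hurwitz_two_one.tsum_eq

lemma hurwitz_two_le {x : ℝ} (hx : 0 ≤ x) : hurwitz 2 x ≤ π ^ 2 / 6 :=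
  hasSum_one_div_succ_sq.tsum_eq ▸ Summable.tsum_le_tsum
    (fun n => one_div_succ_add_pow_le n le_rfl hx) (summable_hurwitz le_rfl hx)
    hasSum_one_div_succ_sq.summable

noncomputable def logGammaTerm (n : ℕ) (x : ℝ) : ℝ := x / (n + 1) - log (1 + x / (n + 1))

lemma logGammaTerm_nonneg (n : ℕ) {x : ℝ} (hx : 0 ≤ x) : 0 ≤ logGammaTerm n x :=
  sub_log_one_add_nonneg (by positivity)

lemma logGammaTerm_le (n : ℕ) {x : ℝ} (hx : 0 ≤ x) :
    logGammaTerm n x ≤ x ^ 2 * (1 / ((n : ℝ) + 1) ^ 2) := by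
  calc logGammaTerm n x ≤ (x / (n + 1)) ^ 2 := sub_log_one_add_le_sq (by positivity)
    _ = x ^ 2 * (1 / ((n : ℝ) + 1) ^ 2) := by field_simp

lemma summable_logGammaTerm {x : ℝ} (hx : 0 ≤ x) : Summable (logGammaTerm · x) :=
  .of_nonneg_of_le (fun n => logGammaTerm_nonneg n hx) (fun n => logGammaTerm_le n hx)
    (hasSum_one_div_succ_sq.summable.mul_left _)

lemma sum_range_logGammaTerm {x : ℝ} (hx : 0 < x) (N : ℕ) :
    ∑ n ∈ Finset.range N, logGammaTerm n x =
      x * (harmonic N - log N) + log x + BohrMollerup.logGammaSeq x N := by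
  induction N with
  | zero => simp [BohrMollerup.logGammaSeq]
  | succ N ih =>
    have hN : (0 : ℝ) < N + 1 := by positivity
    rw [Finset.sum_range_succ, ih, harmonic_succ]
    simp only [BohrMollerup.logGammaSeq, Finset.sum_range_succ, Nat.factorial_succ, logGammaTerm]
    push_cast
    rw [log_mul hN.ne' (by positivity), show 1 + x / (N + 1) = (x + (N + 1)) / (N + 1) by
      field_simp; ring, log_div (by positivity) hN.ne']
    ring

lemma hasSum_logGammaTerm {x : ℝ} (hx : 0 < x) :
    HasSum (logGammaTerm · x) (log (Gamma x) + log x + γ * x) := by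
  refine (summable_logGammaTerm hx.le).hasSum_iff_tendsto_nat.mpr ?_
  have h := ((tendsto_harmonic_sub_log.const_mul x).add_const (log x)).add
    (BohrMollerup.tendsto_log_gamma hx)
  simp only [sum_range_logGammaTerm hx]
  convert h using 2
  ring

lemma log_Gamma_add_nonneg {x : ℝ} (hx : 0 < x) : 0 ≤ log (Gamma x) + log x + γ * x :=
  (hasSum_logGammaTerm hx).nonneg fun n => logGammaTerm_nonneg n hx.le

lemma log_Gamma_add_le {x : ℝ} (hx : 0 < x) :
    log (Gamma x) + log x + γ * x ≤ x ^ 2 * (π ^ 2 / 6) :=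
  hasSum_le (fun n => logGammaTerm_le n hx.le) (hasSum_logGammaTerm hx)
    (hasSum_one_div_succ_sq.mul_left _)

noncomputable def digammaTerm (n : ℕ) (x : ℝ) : ℝ := 1 / ((n : ℝ) + 1) - 1 / ((n : ℝ) + 1 + x)

/-- `digammaSeries x = ψ(x + 1) + γ`. -/
noncomputable def digammaSeries (x : ℝ) : ℝ := ∑' n : ℕ, digammaTerm n x

lemma norm_digammaTerm_le (n : ℕ) {x : ℝ} (hx : 0 ≤ x) :
    ‖digammaTerm n x‖ ≤ x * (1 / ((n : ℝ) + 1) ^ 2) := by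
  have h : digammaTerm n x = x / (((n : ℝ) + 1) * ((n : ℝ) + 1 + x)) := by
    simp only [digammaTerm]; field_simp; ring
  rw [h, Real.norm_of_nonneg (by positivity), mul_one_div]
  gcongr
  nlinarith

lemma hasDerivAt_logGammaTerm (n : ℕ) {x : ℝ} (hx : -1 < x) :
    HasDerivAt (logGammaTerm n) (digammaTerm n x) x := by
  have hn : (0 : ℝ) < n + 1 := by positivity
  have hpos : 0 < 1 + x / (n + 1) := by
    rw [show 1 + x / (n + 1) = (n + 1 + x) / (n + 1) by field_simp]
    exact div_pos (by linarith [n.cast_nonneg (α := ℝ)]) hn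
  have h := ((hasDerivAt_id x).div_const ((n : ℝ) + 1)).sub
    (((hasDerivAt_id x).div_const ((n : ℝ) + 1)).const_add 1 |>.log hpos.ne')
  refine h.congr_deriv ?_
  simp only [id, digammaTerm]
  field_simp

lemma hasDerivAt_logGammaSeries {x : ℝ} (hx : x ∈ Ioo 0 2) :
    HasDerivAt (fun y => ∑' n, logGammaTerm n y) (digammaSeries x) x := by
  refine hasDerivAt_tsum_of_isPreconnected (hasSum_one_div_succ_sq.summable.mul_left 2)
    isOpen_Ioo isPreconnected_Ioo (fun n y hy => hasDerivAt_logGammaTerm n (by linarith [hy.1]))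
    (fun n y hy => ?_) hx (summable_logGammaTerm hx.1.le) hx
  exact (norm_digammaTerm_le n hy.1.le).trans (by gcongr; exact hy.2.le)

lemma hasDerivAt_log_Gamma {x : ℝ} (hx : x ∈ Ioo 0 2) :
    HasDerivAt (fun y => log (Gamma y)) (digammaSeries x - 1 / x - γ) x := by
  have h := ((hasDerivAt_logGammaSeries hx).sub (hasDerivAt_log hx.1.ne')).sub
    ((hasDerivAt_id x).const_mul γ)
  rw [one_div]
  refine (h.congr_of_eventuallyEq ?_).congr_deriv (by simp)
  filter_upwards [isOpen_Ioi.mem_nhds hx.1] with y hy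
  simp only [Pi.sub_apply, id, (hasSum_logGammaTerm hy).tsum_eq]
  ring

lemma hasDerivAt_digammaSeries {x : ℝ} (hx : 0 < x) :
    HasDerivAt digammaSeries (hurwitz 2 x) x := by
  refine hasDerivAt_tsum_of_isPreconnected (g' := fun (n : ℕ) y => 1 / ((n : ℝ) + 1 + y) ^ 2)
    hasSum_one_div_succ_sq.summable isOpen_Ioi isPreconnected_Ioi (fun n y hy => ?_)
    (fun n y hy => ?_) hx
    (.of_norm_bounded (hasSum_one_div_succ_sq.summable.mul_left x)
      (fun n => norm_digammaTerm_le n hx.le)) hx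
  · have hy : (0 : ℝ) < n + 1 + y := by have : (0 : ℝ) < y := hy; positivity
    unfold digammaTerm
    simpa using
      (hasDerivAt_one_div_pow ((n : ℝ) + 1) 1 hy.ne').const_sub (1 / ((n : ℝ) + 1))
  · have hy : (0 : ℝ) ≤ y := le_of_lt hy
    rw [Real.norm_of_nonneg (by positivity)]
    exact one_div_succ_add_pow_le n le_rfl hy

lemma digammaSeries_one : digammaSeries 1 = 1 := by
  have h := (hasDerivAt_Gamma_one.log (by simp)).unique
    (hasDerivAt_log_Gamma (x := 1) ⟨one_pos, one_lt_two⟩)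
  simp only [Gamma_one, div_one] at h
  linarith

noncomputable def gap (p x : ℝ) : ℝ := log (Gamma x) - (p * (x - 1) - γ) * log x

noncomputable def gapDeriv (p x : ℝ) : ℝ :=
  digammaSeries x - 1 / x - γ - p * log x - (p * (x - 1) - γ) / x

noncomputable def gapDeriv2 (p x : ℝ) : ℝ := hurwitz 2 x - p / x - (p + γ - 1) / x ^ 2

lemma rpow_lt_Gamma_iff {p x : ℝ} (hx : 0 < x) :
    x ^ (p * (x - 1) - γ) < Gamma x ↔ 0 < gap p x := by
  rw [← log_lt_log_iff (rpow_pos_of_pos hx _) (Gamma_pos_of_pos hx), log_rpow hx, gap, sub_pos]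

lemma Gamma_lt_rpow_iff {p x : ℝ} (hx : 0 < x) :
    Gamma x < x ^ (p * (x - 1) - γ) ↔ gap p x < 0 := by
  rw [← log_lt_log_iff (Gamma_pos_of_pos hx) (rpow_pos_of_pos hx _), log_rpow hx, gap, sub_neg]

lemma hasDerivAt_gap (p : ℝ) {x : ℝ} (hx : x ∈ Ioo 0 2) :
    HasDerivAt (gap p) (gapDeriv p x) x := by
  have h := (hasDerivAt_log_Gamma hx).sub
    ((((hasDerivAt_id x).sub_const 1).const_mul p).sub_const γ |>.mul (hasDerivAt_log hx.1.ne'))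
  refine h.congr_deriv ?_
  simp only [gapDeriv, id]
  field_simp
  ring

lemma hasDerivAt_gapDeriv (p : ℝ) {x : ℝ} (hx : 0 < x) :
    HasDerivAt (gapDeriv p) (gapDeriv2 p x) x := by
  have hlin := (((hasDerivAt_id x).sub_const 1).const_mul p).sub_const γ
  have h := ((((hasDerivAt_digammaSeries hx).sub ((hasDerivAt_id x).fun_inv hx.ne')).sub_const
    γ).sub ((hasDerivAt_log hx.ne').const_mul p)).sub (hlin.div (hasDerivAt_id x) hx.ne')
  refine (h.congr_of_eventuallyEq (.of_eq ?_)).congr_deriv ?_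
  · ext y
    simp [gapDeriv, one_div]
  · simp only [gapDeriv2, id]
    field_simp
    ring

lemma gap_one (p : ℝ) : gap p 1 = 0 := by simp [gap]

lemma gapDeriv_one (p : ℝ) : gapDeriv p 1 = 0 := by simp [gapDeriv, digammaSeries_one]

lemma exists_gap_eq (p : ℝ) {x : ℝ} (hx : x ∈ Ioo 0 1) :
    ∃ ξ ∈ Ioo x 1, ∃ η ∈ Ioo ξ 1, gap p x = (1 - x) * (1 - ξ) * gapDeriv2 p η :=
  exists_eq_mul_mul_deriv2 hx.2
    (fun y hy => hasDerivAt_gap p ⟨hx.1.trans_le hy.1, by linarith [hy.2]⟩)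
    (fun y hy => hasDerivAt_gapDeriv p (hx.1.trans_le hy.1)) (gap_one p) (gapDeriv_one p)

lemma gap_pos_of_forall_gapDeriv2_pos {p x : ℝ} (hx : x ∈ Ioo 0 1)
    (h : ∀ y ∈ Ioo x 1, 0 < gapDeriv2 p y) : 0 < gap p x := by
  obtain ⟨ξ, hξ, η, hη, heq⟩ := exists_gap_eq p hx
  rw [heq]
  exact mul_pos (mul_pos (sub_pos.2 hx.2) (sub_pos.2 hξ.2)) (h η ⟨hξ.1.trans hη.1, hη.2⟩)

lemma gap_neg_of_forall_gapDeriv2_neg {p x : ℝ} (hx : x ∈ Ioo 0 1)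
    (h : ∀ y ∈ Ioo x 1, gapDeriv2 p y < 0) : gap p x < 0 := by
  obtain ⟨ξ, hξ, η, hη, heq⟩ := exists_gap_eq p hx
  rw [heq]
  exact mul_neg_of_pos_of_neg (mul_pos (sub_pos.2 hx.2) (sub_pos.2 hξ.2))
    (h η ⟨hξ.1.trans hη.1, hη.2⟩)

lemma strictMonoOn_mul_hurwitz_two : StrictMonoOn (fun x => x * hurwitz 2 x) (Icc 0 1) := by
  intro a ha b hb hab
  have key : ∀ n : ℕ, a * (1 / ((n : ℝ) + 1 + a) ^ 2) < b * (1 / ((n : ℝ) + 1 + b) ^ 2) := by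
    intro n
    have h1 : (1 : ℝ) ≤ n + 1 := by linarith [n.cast_nonneg (α := ℝ)]
    have hab1 : a * b < 1 := by nlinarith [ha.1, hb.2]
    have := ha.1
    rw [mul_one_div, mul_one_div, div_lt_div_iff₀ (by positivity) (pow_pos (by linarith) 2)]
    nlinarith [mul_pos (sub_pos.2 hab) (show 0 < ((n : ℝ) + 1) ^ 2 - a * b by nlinarith)]
  simp only [hurwitz, ← tsum_mul_left]
  exact Summable.tsum_lt_tsum (i := 0) (fun n => (key n).le) (key 0)
    ((summable_hurwitz le_rfl ha.1).mul_left a) ((summable_hurwitz le_rfl hb.1).mul_left b)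

lemma gapDeriv2_one_sub_euler {y : ℝ} (hy : 0 < y) :
    gapDeriv2 (1 - γ) y = (y * hurwitz 2 y - (1 - γ)) / y := by
  simp only [gapDeriv2]
  field_simp
  ring

lemma exists_gapDeriv2_one_sub_euler_sign_change :
    ∃ c ∈ Ioo (1 / 5 : ℝ) 1, (∀ y ∈ Ioo 0 c, gapDeriv2 (1 - γ) y < 0) ∧
      ∀ y ∈ Ioo c 1, 0 < gapDeriv2 (1 - γ) y := by
  have hγ := Real.eulerMascheroniConstant_lt_two_thirds
  have hγ' := Real.one_half_lt_eulerMascheroniConstant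
  have hπ := Real.pi_lt_d2
  have hπ' := Real.pi_gt_d2
  have hcont : ContinuousOn (fun x => x * hurwitz 2 x) (Icc (1 / 5) 1) := fun y hy =>
    (continuousAt_id.mul (hasDerivAt_hurwitz le_rfl (by linarith [hy.1])).continuousAt
      ).continuousWithinAt
  have hfifth : (1 / 5 : ℝ) * hurwitz 2 (1 / 5) < 1 - γ := by
    nlinarith [hurwitz_two_le (x := 1 / 5) (by norm_num)]
  have hone : 1 - γ < 1 * hurwitz 2 1 := by
    rw [hurwitz_two_one]; nlinarith
  obtain ⟨c, hc, hwc⟩ := intermediate_value_Ioo (by norm_num) hcont ⟨hfifth, hone⟩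
  have hmono := strictMonoOn_mul_hurwitz_two
  have hcmem : c ∈ Icc (0 : ℝ) 1 := ⟨by linarith [hc.1], hc.2.le⟩
  refine ⟨c, hc, fun y hy => ?_, fun y hy => ?_⟩
  · have := hmono ⟨hy.1.le, by linarith [hy.2, hc.2]⟩ hcmem hy.2
    rw [gapDeriv2_one_sub_euler hy.1]
    exact div_neg_of_neg_of_pos (by simp only at this hwc; linarith) hy.1
  · have := hmono hcmem ⟨by linarith [hy.1, hc.1], hy.2.le⟩ hy.1
    rw [gapDeriv2_one_sub_euler (by linarith [hy.1, hc.1])]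
    exact div_pos (by simp only at this hwc; linarith) (by linarith [hy.1, hc.1])

lemma gap_one_sub_euler_pos_of_le_one_eighth {x : ℝ} (hx : 0 < x) (hx8 : x ≤ 1 / 8) :
    0 < gap (1 - γ) x := by
  have hγ := Real.eulerMascheroniConstant_lt_two_thirds
  have hlog : log x ≤ -(3 * log 2) := by
    calc log x ≤ log (1 / 8) := log_le_log hx hx8
      _ = -(3 * log 2) := by
        rw [one_div, log_inv, show (8 : ℝ) = 2 ^ 3 by norm_num, log_pow]; norm_num
  have hkey : 0 < x * ((1 - γ) * -log x - γ) :=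
    mul_pos hx (by nlinarith [Real.log_two_gt_d9])
  have heq : gap (1 - γ) x = (log (Gamma x) + log x + γ * x) + x * ((1 - γ) * -log x - γ) := by
    simp only [gap]; ring
  linarith [log_Gamma_add_nonneg hx]

theorem gap_one_sub_euler_pos {x : ℝ} (hx : x ∈ Ioo 0 1) : 0 < gap (1 - γ) x := by
  obtain ⟨c, hc, hneg, hpos⟩ := exists_gapDeriv2_one_sub_euler_sign_change
  have hright : ∀ y ∈ Ico c 1, 0 < gap (1 - γ) y := fun y hy =>
    gap_pos_of_forall_gapDeriv2_pos ⟨by linarith [hy.1, hc.1], hy.2⟩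
      fun z hz => hpos z ⟨hy.1.trans_lt hz.1, hz.2⟩
  rcases le_or_gt x (1 / 8) with h8 | h8
  · exact gap_one_sub_euler_pos_of_le_one_eighth hx.1 h8
  rcases le_or_gt c x with hcx | hxc
  · exact hright x ⟨hcx, hx.2⟩
  have hsub : ∀ y ∈ Icc (1 / 8 : ℝ) c, y ∈ Ioo (0 : ℝ) 2 := fun y hy =>
    ⟨by linarith [hy.1], by linarith [hy.2, hc.2]⟩
  have hconc : ConcaveOn ℝ (Icc (1 / 8) c) (gap (1 - γ)) := by
    refine concaveOn_of_hasDerivWithinAt2_nonpos (f' := gapDeriv (1 - γ)) (f'' := gapDeriv2 (1 - γ))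
      (convex_Icc _ _)
      (fun y hy => (hasDerivAt_gap _ (hsub y hy)).continuousAt.continuousWithinAt)
      (fun y hy => ?_) (fun y hy => ?_) (fun y hy => ?_) <;> rw [interior_Icc] at hy
    · exact (hasDerivAt_gap _ (hsub y (Ioo_subset_Icc_self hy))).hasDerivWithinAt
    · exact (hasDerivAt_gapDeriv _ (by linarith [hy.1])).hasDerivWithinAt
    · exact (hneg y ⟨by linarith [hy.1], hy.2⟩).le
  exact hconc.pos_of_pos_of_nonneg (gap_one_sub_euler_pos_of_le_one_eighth (by norm_num) le_rfl)
    (hright c ⟨le_rfl, hc.2⟩).le ⟨h8.le, hxc⟩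

lemma beta_pos : 0 < β₀ := by
  nlinarith [Real.eulerMascheroniConstant_lt_two_thirds, Real.pi_gt_three]

lemma beta_add_euler_sub_one_pos : 0 < β₀ + γ - 1 := by
  nlinarith [Real.one_half_lt_eulerMascheroniConstant, Real.pi_gt_d2]

lemma hasSum_sq_mul_hurwitz_two_deriv2 {x : ℝ} (hx : 0 < x) :
    HasSum (fun n : ℕ => 2 * ((n : ℝ) + 1) * ((n : ℝ) + 1 - 2 * x) / ((n : ℝ) + 1 + x) ^ 4)
      (2 * hurwitz 2 x - 8 * x * hurwitz 3 x + 6 * x ^ 2 * hurwitz 4 x) := by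
  have h2 := (summable_hurwitz (k := 2) le_rfl hx.le).hasSum.mul_left 2
  have h3 := (summable_hurwitz (k := 3) (by norm_num) hx.le).hasSum.mul_left (8 * x)
  have h4 := (summable_hurwitz (k := 4) (by norm_num) hx.le).hasSum.mul_left (6 * x ^ 2)
  refine ((h2.sub h3).add h4).congr_fun fun n => ?_
  have : (0 : ℝ) < n + 1 + x := by positivity
  field_simp
  ring

lemma le_sq_mul_hurwitz_two_deriv2_term (n : ℕ) {x : ℝ} (hx : 0 < x) (hx1 : x ≤ 1) :
    2 * ((n : ℝ) + 1) * ((n : ℝ) - 1) / ((n : ℝ) + 2) ^ 4 ≤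
      2 * ((n : ℝ) + 1) * ((n : ℝ) + 1 - 2 * x) / ((n : ℝ) + 1 + x) ^ 4 := by
  rcases n with _ | n
  · have hcubic : 0 ≤ 17 - x ^ 3 - 5 * x ^ 2 - 11 * x := by nlinarith
    rw [div_le_div_iff₀ (by norm_num) (by positivity)]
    push_cast
    nlinarith [mul_nonneg (sub_nonneg.2 hx1) hcubic]
  · push_cast
    exact div_le_div₀ (by nlinarith) (by nlinarith) (by positivity)
      (pow_le_pow_left₀ (by positivity) (by linarith) 4)

lemma sq_mul_hurwitz_two_deriv2_pos {x : ℝ} (hx : 0 < x) (hx1 : x ≤ 1) :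
    0 < 2 * hurwitz 2 x - 8 * x * hurwitz 3 x + 6 * x ^ 2 * hurwitz 4 x := by
  -- Only the `n = 0` term is negative; the bounds for the next eight terms (their values at
  -- `x = 1`) outweigh it.
  have hfin : 0 < ∑ n ∈ Finset.range 9, 2 * ((n : ℝ) + 1) * ((n : ℝ) - 1) / ((n : ℝ) + 2) ^ 4 := by
    norm_num [Finset.sum_range_succ]
  refine hfin.trans_le ((Finset.sum_le_sum fun n _ => le_sq_mul_hurwitz_two_deriv2_term n hx hx1
    ).trans (sum_le_hasSum _ (fun n hn => ?_) (hasSum_sq_mul_hurwitz_two_deriv2 hx)))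
  have : (9 : ℝ) ≤ n := by simp only [Finset.mem_range, not_lt] at hn; exact_mod_cast hn
  exact div_nonneg (by nlinarith) (by positivity)

lemma convexOn_sq_mul_hurwitz_two : ConvexOn ℝ (Ioc 0 1) (fun x => x ^ 2 * hurwitz 2 x) := by
  have hd : ∀ y : ℝ, 0 < y → HasDerivAt (fun x => x ^ 2 * hurwitz 2 x)
      (2 * y * hurwitz 2 y - 2 * y ^ 2 * hurwitz 3 y) y := fun y hy =>
    ((hasDerivAt_pow 2 y).mul (hasDerivAt_hurwitz le_rfl hy)).congr_deriv (by push_cast; ring)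
  have hd2 : ∀ y : ℝ, 0 < y → HasDerivAt (fun x => 2 * x * hurwitz 2 x - 2 * x ^ 2 * hurwitz 3 x)
      (2 * hurwitz 2 y - 8 * y * hurwitz 3 y + 6 * y ^ 2 * hurwitz 4 y) y := fun y hy =>
    ((((hasDerivAt_id y).const_mul 2).mul (hasDerivAt_hurwitz le_rfl hy)).sub
      (((hasDerivAt_pow 2 y).const_mul 2).mul (hasDerivAt_hurwitz (by norm_num) hy))).congr_deriv
      (by simp only [id]; push_cast; ring)
  refine convexOn_of_hasDerivWithinAt2_nonneg (convex_Ioc 0 1) (f' := fun y =>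
    2 * y * hurwitz 2 y - 2 * y ^ 2 * hurwitz 3 y)
    (f'' := fun y => 2 * hurwitz 2 y - 8 * y * hurwitz 3 y + 6 * y ^ 2 * hurwitz 4 y)
    (fun y hy => (hd y hy.1).continuousAt.continuousWithinAt) (fun y hy => ?_) (fun y hy => ?_)
    (fun y hy => ?_) <;> rw [interior_Ioc] at hy
  · exact (hd y hy.1).hasDerivWithinAt
  · exact (hd2 y hy.1).hasDerivWithinAt
  · exact (sq_mul_hurwitz_two_deriv2_pos hy.1 hy.2.le).le

lemma sq_mul_hurwitz_two_lt_of_le {x : ℝ} (hx : 0 < x) (hx6 : x ≤ 1 / 6) :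
    x ^ 2 * hurwitz 2 x < β₀ * x + (β₀ + γ - 1) := by
  have hγ := Real.one_half_lt_eulerMascheroniConstant
  have hπ := Real.pi_gt_d2
  have hπ' := Real.pi_lt_d2
  have h := hurwitz_two_le hx.le
  have h0 : 0 ≤ hurwitz 2 x := tsum_nonneg fun n => by positivity
  have hx2 : x ^ 2 ≤ 1 / 36 := by nlinarith
  nlinarith [mul_le_mul hx2 h h0 (by norm_num)]

lemma sq_mul_hurwitz_two_lt {x : ℝ} (hx : x ∈ Ioo 0 1) :
    x ^ 2 * hurwitz 2 x < β₀ * x + (β₀ + γ - 1) := by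
  rcases le_or_gt x (1 / 6) with h6 | h6
  · exact sq_mul_hurwitz_two_lt_of_le hx.1 h6
  have hconc : ConcaveOn ℝ (Icc (1 / 6) 1)
      (fun x => β₀ * x + (β₀ + γ - 1) - x ^ 2 * hurwitz 2 x) :=
    (((concaveOn_id (convex_Icc _ _)).smul beta_pos.le).add_const _).sub
      (convexOn_sq_mul_hurwitz_two.subset (Icc_subset_Ioc (by norm_num) le_rfl) (convex_Icc _ _))
  have := hconc.pos_of_pos_of_nonneg (sub_pos.2 (sq_mul_hurwitz_two_lt_of_le (by norm_num) le_rfl))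
    (le_of_eq (by simp only [hurwitz_two_one]; ring)) ⟨h6.le, hx.2⟩
  linarith

lemma gapDeriv2_beta_neg {x : ℝ} (hx : x ∈ Ioo 0 1) : gapDeriv2 β₀ x < 0 := by
  have h : gapDeriv2 β₀ x = (x ^ 2 * hurwitz 2 x - (β₀ * x + (β₀ + γ - 1))) / x ^ 2 := by
    simp only [gapDeriv2]
    field_simp [hx.1.ne']
    ring
  rw [h]
  exact div_neg_of_neg_of_pos (sub_neg.2 (sq_mul_hurwitz_two_lt hx)) (pow_pos hx.1 2)

theorem gap_beta_neg {x : ℝ} (hx : x ∈ Ioo 0 1) : gap β₀ x < 0 :=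
  gap_neg_of_forall_gapDeriv2_neg hx fun _ hy => gapDeriv2_beta_neg ⟨hx.1.trans hy.1, hy.2⟩

theorem le_one_sub_euler_of_forall_gap_pos {p : ℝ} (h : ∀ x ∈ Ioo 0 1, 0 < gap p x) :
    p ≤ 1 - γ := by
  have key : ∀ x ∈ Ioo (0 : ℝ) 1,
      p * (1 - x) - (1 - γ) - x ^ 2 * (π ^ 2 / 6) / (1 - x) < 0 := by
    intro x hx
    have hx1 : 0 < 1 - x := sub_pos.2 hx.2
    have hL : 1 - x ≤ -log x := by linarith [log_le_sub_one_of_pos hx.1]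
    have hgap : gap p x = (log (Gamma x) + log x + γ * x) - γ * x + (1 - γ) * -log x
        - p * (1 - x) * -log x := by
      simp only [gap]; ring
    have hγx : 0 ≤ γ * x :=
      mul_nonneg (by linarith [Real.one_half_lt_eulerMascheroniConstant]) hx.1.le
    have h1 : (p * (1 - x) - (1 - γ)) * -log x < x ^ 2 * (π ^ 2 / 6) := by
      linarith [h x hx, log_Gamma_add_le hx.1]
    have h2 : x ^ 2 * (π ^ 2 / 6) ≤ x ^ 2 * (π ^ 2 / 6) / (1 - x) * -log x := by
      rw [div_mul_eq_mul_div, le_div_iff₀ hx1]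
      exact mul_le_mul_of_nonneg_left hL (by positivity)
    have := lt_of_mul_lt_mul_right (h1.trans_le h2) (hx1.le.trans hL)
    linarith
  have hcont : ContinuousAt (fun x => p * (1 - x) - (1 - γ) - x ^ 2 * (π ^ 2 / 6) / (1 - x)) 0 := by
    fun_prop (disch := norm_num)
  have := le_of_tendsto (hcont.tendsto.mono_left nhdsWithin_le_nhds)
    (Filter.mem_of_superset (Ioo_mem_nhdsGT one_pos) fun x hx => (key x hx).le)
  norm_num at this
  linarith

lemma neg_gap_beta_le {x : ℝ} (hx : x ∈ Ioo 0 1) :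
    -gap β₀ x ≤ (1 - x) ^ 2 * (β₀ / x + (β₀ + γ - 1) / x ^ 2 - hurwitz 2 1) := by
  obtain ⟨ξ, hξ, η, hη, heq⟩ := exists_gap_eq β₀ hx
  have hxη : x < η := hξ.1.trans hη.1
  have hη0 : 0 < η := hx.1.trans hxη
  have hbound : -gapDeriv2 β₀ η ≤ β₀ / x + (β₀ + γ - 1) / x ^ 2 - hurwitz 2 1 := by
    have h1 : β₀ / η ≤ β₀ / x := div_le_div_of_nonneg_left beta_pos.le hx.1 hxη.le
    have h2 : (β₀ + γ - 1) / η ^ 2 ≤ (β₀ + γ - 1) / x ^ 2 :=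
      div_le_div_of_nonneg_left beta_add_euler_sub_one_pos.le (pow_pos hx.1 2)
        (pow_le_pow_left₀ hx.1.le hxη.le 2)
    have h3 : hurwitz 2 1 ≤ hurwitz 2 η :=
      hurwitz_antitoneOn le_rfl (mem_Ici.2 hη0.le) (mem_Ici.2 zero_le_one) hη.2.le
    simp only [gapDeriv2]
    linarith
  calc -gap β₀ x = (1 - x) * (1 - ξ) * -gapDeriv2 β₀ η := by rw [heq]; ring
    _ ≤ (1 - x) * (1 - x) * (β₀ / x + (β₀ + γ - 1) / x ^ 2 - hurwitz 2 1) :=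
      mul_le_mul (mul_le_mul_of_nonneg_left (by linarith [hξ.1]) (sub_pos.2 hx.2).le) hbound
        (neg_pos.2 (gapDeriv2_beta_neg ⟨hη0, hη.2⟩)).le (mul_self_nonneg _)
    _ = _ := by ring

theorem le_of_forall_gap_neg {p : ℝ} (h : ∀ x ∈ Ioo 0 1, gap p x < 0) : β₀ ≤ p := by
  have key : ∀ x ∈ Ioo (0 : ℝ) 1, β₀ - p ≤ β₀ / x + (β₀ + γ - 1) / x ^ 2 - hurwitz 2 1 := by
    intro x hx
    have hD : (1 - x) ^ 2 ≤ (x - 1) * log x := by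
      nlinarith [mul_le_mul_of_nonpos_left (log_le_sub_one_of_pos hx.1) (sub_nonpos.2 hx.2.le)]
    have hsplit : gap p x = gap β₀ x + (β₀ - p) * ((x - 1) * log x) := by
      simp only [gap]; ring
    have hbound := neg_gap_beta_le hx
    have hsq := sq_pos_of_pos (sub_pos.2 hx.2)
    have hM := pos_of_mul_pos_right ((neg_pos.2 (gap_beta_neg hx)).trans_le hbound) hsq.le
    by_contra! hlt
    nlinarith [h x hx, mul_le_mul_of_nonneg_left hD (hM.trans hlt).le,
      mul_lt_mul_of_pos_left hlt hsq]
  have hcont : ContinuousAt (fun x => β₀ / x + (β₀ + γ - 1) / x ^ 2 - hurwitz 2 1) 1 := by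
    fun_prop (disch := norm_num)
  have := ge_of_tendsto (hcont.tendsto.mono_left nhdsWithin_le_nhds)
    (Filter.mem_of_superset (Ioo_mem_nhdsLT one_pos) key)
  rw [hurwitz_two_one] at this
  linarith

end Alzer

theorem alzer_gamma_bounds :
    (∀ x ∈ Set.Ioo (0 : ℝ) 1,
      x ^ ((1 - Real.eulerMascheroniConstant) * (x - 1) - Real.eulerMascheroniConstant)
        < Real.Gamma x ∧
      Real.Gamma x <
        x ^ ((π ^ 2 / 6 - Real.eulerMascheroniConstant) / 2 * (x - 1)
              - Real.eulerMascheroniConstant)) ∧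
    (∀ α : ℝ,
      (∀ x ∈ Set.Ioo (0 : ℝ) 1,
        x ^ (α * (x - 1) - Real.eulerMascheroniConstant) < Real.Gamma x) →
      α ≤ 1 - Real.eulerMascheroniConstant) ∧
    (∀ β : ℝ,
      (∀ x ∈ Set.Ioo (0 : ℝ) 1,
        Real.Gamma x < x ^ (β * (x - 1) - Real.eulerMascheroniConstant)) →
      (π ^ 2 / 6 - Real.eulerMascheroniConstant) / 2 ≤ β) := by
  refine ⟨fun x hx => ⟨(Alzer.rpow_lt_Gamma_iff hx.1).2 (Alzer.gap_one_sub_euler_pos hx),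
    (Alzer.Gamma_lt_rpow_iff hx.1).2 (Alzer.gap_beta_neg hx)⟩, fun α hα => ?_, fun β hβ => ?_⟩
  · exact Alzer.le_one_sub_euler_of_forall_gap_pos fun x hx =>
      (Alzer.rpow_lt_Gamma_iff hx.1).1 (hα x hx)
  · exact Alzer.le_of_forall_gap_neg fun x hx => (Alzer.Gamma_lt_rpow_iff hx.1).1 (hβ x hx)
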